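/- arXiv:1408.0420 — 6 statements merged into one kernel-verified Lean document; each statement's English description precedes it below -/
import Mathlib

section
/- Let p be a prime and let h_1, h_2, q be integers with 1 ≤ h_1 ≤ h_2, h_1 + h_2 ≤ p, and 0 ≤ q < h_1 (so the two intervals overlap). Then Σ_{m=1}^{p} F_p(m, h_1) · F_p(m + q, h_2) = h_1 - q + h_1 h_2 (p - 2). -/
/-!
Writing `F_p(m, h) = h - [p ∈ [m, m + h)]`, which holds because the intervals involved lie in
`[1, 2p)` and so contain no multiple of `p` other than `p` itself, the product expands into
four sums of indicators. The `m ∈ [1, p]` with `p ∈ [m, m + h₁)` form an interval of length `h₁`,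
those with `p ∈ [m + q, m + q + h₂)` one of length `h₂`, and the two overlap in `(p - h₁, p - q]`,
of length `h₁ - q` since `h₁ ≤ q + h₂`.
-/

/-- `F n m h` is the number of integers `r` with `m ≤ r ≤ m + h - 1` coprime to `n`. -/
noncomputable def F (n : ℕ) (m : ℤ) (h : ℕ) : ℕ :=
  ((Finset.Ico m (m + (h : ℤ))).filter (fun r => Int.gcd r n = 1)).card

open Finset

lemma Int.gcd_natCast_eq_one_iff_not_dvd {p : ℕ} (hp : p.Prime) (r : ℤ) :
    Int.gcd r p = 1 ↔ ¬ (p : ℤ) ∣ r := by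
  rw [← Int.isCoprime_iff_gcd_eq_one, isCoprime_comm]
  exact (Nat.prime_iff_prime_int.mp hp).coprime_iff_not_dvd

lemma F_add_card_filter_dvd {p : ℕ} (hp : p.Prime) (m : ℤ) (h : ℕ) :
    F p m h + #{r ∈ Ico m (m + h) | (p : ℤ) ∣ r} = h := by
  have hF : F p m h = #{r ∈ Ico m (m + h) | ¬ (p : ℤ) ∣ r} := by
    unfold F
    simp only [Int.gcd_natCast_eq_one_iff_not_dvd hp]
  rw [hF, add_comm, card_filter_add_card_filter_not, Int.card_Ico]
  omega

lemma filter_dvd_Ico_eq_filter_eq {p : ℕ} {a : ℤ} {h : ℕ} (ha : 0 < a) (hh : a + h ≤ 2 * p) :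
    {r ∈ Ico a (a + h) | (p : ℤ) ∣ r} = {r ∈ Ico a (a + h) | r = (p : ℤ)} := by
  refine filter_congr fun r hr => ⟨?_, fun hr => hr ▸ dvd_rfl⟩
  rintro ⟨k, rfl⟩
  rw [mem_Ico] at hr
  obtain rfl : k = 1 := by
    have : 0 < k := pos_of_mul_pos_right (ha.trans_le hr.1) (Int.natCast_nonneg p)
    have : k < 2 := by nlinarith
    omega
  exact mul_one _

lemma F_prime_eq_sub_ite_mem {p : ℕ} (hp : p.Prime) {a : ℤ} {h : ℕ} (ha : 0 < a) (hh : a + h ≤ 2 * p) :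
    (F p a h : ℤ) = h - if (p : ℤ) ∈ Ico a (a + h) then 1 else 0 := by
  have := F_add_card_filter_dvd hp a h
  rw [filter_dvd_Ico_eq_filter_eq ha hh, filter_eq'] at this
  split_ifs at this ⊢ <;> simp only [card_singleton, card_empty] at this <;> omega

lemma mem_Ico_add_iff_mem_Ioc {x m : ℤ} {h : ℕ} : x ∈ Ico m (m + h) ↔ m ∈ Ioc (x - h) x := by
  simp only [mem_Ico, mem_Ioc]
  omega

lemma sum_sub_ite_mem_mul_sub_ite_mem {ι R : Type*} [DecidableEq ι] [CommRing R]
    {s A B : Finset ι} (hA : A ⊆ s) (hB : B ⊆ s) (a b : R) :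
    ∑ i ∈ s, (a - if i ∈ A then 1 else 0) * (b - if i ∈ B then 1 else 0) =
      #s * a * b - #A * b - #B * a + #(A ∩ B) := by
  have hexpand : ∀ i, (a - if i ∈ A then 1 else 0) * (b - if i ∈ B then 1 else 0) =
      a * b - (if i ∈ A then b else 0) - (if i ∈ B then a else 0) +
        if i ∈ A ∩ B then 1 else 0 := by
    intro i
    by_cases hiA : i ∈ A <;> by_cases hiB : i ∈ B <;> simp [hiA, hiB] <;> ring
  simp only [hexpand, sum_add_distrib, sum_sub_distrib, sum_ite_mem, sum_const, nsmul_eq_mul,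
    inter_eq_right.mpr hA, inter_eq_right.mpr hB,
    inter_eq_right.mpr (inter_subset_left.trans hA), mul_one]
  ring

theorem sum_F_mul_F_overlap_general (p : ℕ) (hp : p.Prime) (h₁ h₂ q : ℕ)
    (hh : h₁ ≤ h₂) (hsum : h₁ + h₂ ≤ p) (hq : q < h₁) :
    ∑ m ∈ Finset.Icc (1 : ℤ) (p : ℤ), F p m h₁ * F p (m + (q : ℤ)) h₂ =
      h₁ - q + h₁ * h₂ * (p - 2) := by
  set A := Ioc ((p : ℤ) - h₁) p
  set B := Ioc ((p : ℤ) - q - h₂) (p - q)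
  have hF : ∀ m ∈ Icc (1 : ℤ) p, (F p m h₁ : ℤ) * F p (m + q) h₂ =
      (h₁ - if m ∈ A then 1 else 0) * (h₂ - if m ∈ B then 1 else 0) := by
    intro m hm
    rw [mem_Icc] at hm
    have hB : m + q ∈ Ioc ((p : ℤ) - h₂) p ↔ m ∈ B := by
      simp only [B, mem_Ioc]
      omega
    rw [F_prime_eq_sub_ite_mem hp (by omega) (by omega),
      F_prime_eq_sub_ite_mem hp (by omega) (by omega)]
    simp only [mem_Ico_add_iff_mem_Ioc, hB, A]
  have hAs : A ⊆ Icc 1 p := fun m hm => by simp only [A, mem_Ioc, mem_Icc] at hm ⊢; omega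
  have hBs : B ⊆ Icc 1 p := fun m hm => by simp only [B, mem_Ioc, mem_Icc] at hm ⊢; omega
  have hcardA : #A = h₁ := by simp [A]
  have hcardB : #B = h₂ := by simp [B]
  have hcardAB : #(A ∩ B) = h₁ - q := by
    rw [Ioc_inter_Ioc, max_eq_left (by omega), min_eq_right (by omega), Int.card_Ioc]
    omega
  zify [hq.le, hp.two_le] at hcardAB ⊢
  rw [sum_congr rfl hF, sum_sub_ite_mem_mul_sub_ite_mem hAs hBs, hcardA, hcardB, hcardAB,
    Int.card_Icc, Int.toNat_of_nonneg (by omega)]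
  ring

/-- For a prime `p` and integers `1 ≤ h₁ ≤ h₂`, `h₁ + h₂ ≤ p`,
`0 ≤ q < h₁` (two overlapping intervals),
`∑_{m=1}^p F_p(m,h₁) F_p(m+q,h₂) = h₁ - q + h₁ h₂ (p - 2)`. -/
theorem sum_F_mul_F_overlap (p : ℕ) (hp : p.Prime) (h₁ h₂ q : ℕ)
    (hh₁ : 1 ≤ h₁) (hh : h₁ ≤ h₂) (hsum : h₁ + h₂ ≤ p) (hq : q < h₁) :
    ∑ m ∈ Finset.Icc (1 : ℤ) (p : ℤ), F p m h₁ * F p (m + (q : ℤ)) h₂ =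
      h₁ - q + h₁ * h₂ * (p - 2) :=
  sum_F_mul_F_overlap_general p hp h₁ h₂ q hh hsum hq
end

section
/- Let p be a prime and let h_1, h_2, q be integers with 1 ≤ h_1 ≤ h_2, h_1 + h_2 ≤ p, and h_1 ≤ q ≤ p - h_2. Then the covariance of the coprime counts of the two (disjoint) intervals is negative and equals G(p, p, h_1, h_2, q) = -h_1 h_2 / p^2. -/
/-- The covariance of the coprime counts of two intervals of lengths `h₁`, `h₂`
separated by distance `q`. -/
noncomputable def G (n₁ n₂ : ℕ) (h₁ h₂ : ℕ) (q : ℤ) : ℝ :=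
  (1 / ((n₁ : ℝ) * n₂)) *
    ∑ m ∈ Finset.Icc (1 : ℤ) ((n₁ : ℤ) * n₂),
      ((F n₁ m h₁ : ℝ) - (h₁ : ℝ) * (Nat.totient n₁) / n₁) *
        ((F n₂ (m + q) h₂ : ℝ) - (h₂ : ℝ) * (Nat.totient n₂) / n₂)

open Finset

noncomputable def numMultiples (n : ℕ) (m : ℤ) (h : ℕ) : ℕ :=
  #{r ∈ Ico m (m + (h : ℤ)) | (n : ℤ) ∣ r}

lemma card_filter_dvd_add_Ico {n : ℕ} (hn : 0 < n) (a c : ℤ) (k : ℕ) :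
    #{x ∈ Ico a (a + n * k) | (n : ℤ) ∣ x + c} = k := by
  have hmod : ∀ x : ℤ, (n : ℤ) ∣ x + c ↔ x ≡ -c [ZMOD n] := fun x => by
    rw [Int.modEq_iff_dvd, ← dvd_neg]
    ring_nf
  have hshift : ((a + n * k : ℤ) - -c : ℚ) / n = (a - -c : ℤ) / (n : ℚ) + (k : ℤ) := by
    push_cast; field_simp; ring
  have hcard := Int.Ico_filter_modEq_card a (a + n * k) (r := n) (by exact_mod_cast hn) (-c)
  simp_rw [← hmod] at hcard
  push_cast at hshift hcard
  rw [hshift, Int.ceil_add_natCast] at hcard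
  omega

lemma numMultiples_eq_sum (n : ℕ) (m : ℤ) (h : ℕ) :
    numMultiples n m h = ∑ j ∈ Ico (0 : ℤ) h, if (n : ℤ) ∣ m + j then 1 else 0 := by
  have hIco : Ico m (m + h) = (Ico 0 (h : ℤ)).map (addLeftEmbedding m) := by
    simp [map_add_left_Ico]
  rw [numMultiples, card_filter, hIco, sum_map]
  rfl

lemma sum_numMultiples_Ico {n : ℕ} (hn : 0 < n) (a c : ℤ) (k h : ℕ) :
    ∑ m ∈ Ico a (a + n * k), numMultiples n (m + c) h = h * k := by
  simp_rw [numMultiples_eq_sum]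
  rw [sum_comm]
  simp_rw [← card_filter, add_assoc, card_filter_dvd_add_Ico hn]
  simp

lemma F_add_numMultiples {p : ℕ} (hp : p.Prime) (m : ℤ) (h : ℕ) :
    F p m h + numMultiples p m h = h := by
  have hcop : ∀ r : ℤ, Int.gcd r p = 1 ↔ ¬ (p : ℤ) ∣ r := fun r => by
    rw [← Int.isCoprime_iff_gcd_eq_one, isCoprime_comm,
      Prime.coprime_iff_not_dvd (Nat.prime_iff_prime_int.mp hp)]
  rw [F, numMultiples]
  simp_rw [hcop]
  rw [add_comm, card_filter_add_card_filter_not]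
  simp

lemma numMultiples_mul_numMultiples_eq_zero {n h₁ h₂ q : ℕ} (hq : h₁ ≤ q) (hqn : q + h₂ ≤ n)
    (m : ℤ) :
    numMultiples n m h₁ * numMultiples n (m + q) h₂ = 0 := by
  by_contra hne
  obtain ⟨r₁, hr₁⟩ := card_pos.mp (Nat.pos_of_ne_zero (left_ne_zero_of_mul hne))
  obtain ⟨r₂, hr₂⟩ := card_pos.mp (Nat.pos_of_ne_zero (right_ne_zero_of_mul hne))
  simp only [mem_filter, mem_Ico] at hr₁ hr₂
  have := Int.le_of_dvd (by omega) (dvd_sub hr₂.2 hr₁.2)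
  omega

lemma G_prime_eq {p : ℕ} (hp : p.Prime) (h₁ h₂ : ℕ) (q : ℤ) :
    G p p h₁ h₂ q = (∑ m ∈ Icc 1 ((p : ℤ) * p),
      ((h₁ : ℝ) / p - numMultiples p m h₁) * ((h₂ : ℝ) / p - numMultiples p (m + q) h₂)) /
        p ^ 2 := by
  have hF (m : ℤ) (h : ℕ) : (F p m h : ℝ) = h - numMultiples p m h := by
    rw [eq_sub_iff_add_eq]
    exact_mod_cast F_add_numMultiples hp m h
  have hφ : (p.totient : ℝ) = p - 1 := by
    rw [Nat.totient_prime hp, Nat.cast_sub hp.one_le, Nat.cast_one]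
  have hp0 : (p : ℝ) ≠ 0 := by exact_mod_cast hp.ne_zero
  rw [G, one_div, ← sq, inv_mul_eq_div]
  congr 1
  refine sum_congr rfl fun m _ => ?_
  rw [hF, hF, hφ]
  field_simp
  ring

lemma sum_centered_numMultiples_mul {n : ℕ} (hn : 0 < n) (a c : ℤ) (h₁ h₂ : ℕ) :
    ∑ m ∈ Ico a (a + n * n),
      ((h₁ : ℝ) / n - numMultiples n m h₁) *
        ((h₂ : ℝ) / n - numMultiples n (m + c) h₂) =
    ∑ m ∈ Ico a (a + n * n), (numMultiples n m h₁ * numMultiples n (m + c) h₂ : ℝ) -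
      h₁ * h₂ := by
  have hsum₁ : ∑ m ∈ Ico a (a + n * n), (numMultiples n m h₁ : ℝ) = h₁ * n := by
    exact_mod_cast (by simpa using sum_numMultiples_Ico hn a 0 n h₁)
  have hsum₂ : ∑ m ∈ Ico a (a + n * n), (numMultiples n (m + c) h₂ : ℝ) = h₂ * n := by
    exact_mod_cast sum_numMultiples_Ico hn a c n h₂
  have hcard : #(Ico a (a + n * n)) = n * n := by
    rw [Int.card_Ico, add_sub_cancel_left, ← Nat.cast_mul, Int.toNat_natCast]
  have hn0 : (n : ℝ) ≠ 0 := by exact_mod_cast hn.ne'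
  simp only [sub_mul, mul_sub, sum_sub_distrib, ← mul_sum, ← sum_mul, sum_const, hcard, hsum₁,
    hsum₂, nsmul_eq_mul]
  push_cast
  field_simp
  ring

theorem G_disjoint_neg_general (p : ℕ) (hp : p.Prime) (h₁ h₂ q : ℕ)
    (hh₁ : 1 ≤ h₁) (hh : h₁ ≤ h₂)
    (hq₁ : h₁ ≤ q) (hq₂ : q ≤ p - h₂) :
    G p p h₁ h₂ (q : ℤ) < 0 ∧
      G p p h₁ h₂ (q : ℤ) = -((h₁ : ℝ) * h₂) / (p : ℝ) ^ 2 := by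
  -- `q ≥ h₁ ≥ 1` rules out the truncated case `p < h₂` of `hq₂`
  have hwindow : q + h₂ ≤ p := by omega
  have hdisjoint (m : ℤ) : (numMultiples p m h₁ * numMultiples p (m + q) h₂ : ℝ) = 0 := by
    exact_mod_cast numMultiples_mul_numMultiples_eq_zero hq₁ hwindow m
  have hG : G p p h₁ h₂ q = -((h₁ : ℝ) * h₂) / (p : ℝ) ^ 2 := by
    rw [G_prime_eq hp, ← Ico_add_one_right_eq_Icc, add_comm _ 1,
      sum_centered_numMultiples_mul hp.pos, sum_eq_zero fun m _ => hdisjoint m, zero_sub]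
  have hh₁₂ : (0 : ℝ) < h₁ * h₂ :=
    mul_pos (Nat.cast_pos.mpr hh₁) (Nat.cast_pos.mpr (hh₁.trans hh))
  have hp₂ : (0 : ℝ) < p ^ 2 := pow_pos (Nat.cast_pos.mpr hp.pos) 2
  exact ⟨hG ▸ div_neg_of_neg_of_pos (neg_neg_of_pos hh₁₂) hp₂, hG⟩

/-- For a prime `p` and integers `1 ≤ h₁ ≤ h₂`, `h₁ + h₂ ≤ p`,
`h₁ ≤ q ≤ p - h₂` (two disjoint intervals), the covariance is negative and equals
`G(p,p,h₁,h₂,q) = -h₁h₂/p²`. -/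
theorem G_disjoint_neg (p : ℕ) (hp : p.Prime) (h₁ h₂ q : ℕ)
    (hh₁ : 1 ≤ h₁) (hh : h₁ ≤ h₂) (hsum : h₁ + h₂ ≤ p)
    (hq₁ : h₁ ≤ q) (hq₂ : q ≤ p - h₂) :
    G p p h₁ h₂ (q : ℤ) < 0 ∧
      G p p h₁ h₂ (q : ℤ) = -((h₁ : ℝ) * h₂) / (p : ℝ) ^ 2 :=
  G_disjoint_neg_general p hp h₁ h₂ q hh₁ hh hq₁ hq₂
end

section
/- Fix i ≥ 1, interval lengths h_1, h_2 ≥ 0, and a shift q ≥ 0. Then the covariance between the count of coprimes to p_i# and the count of coprimes to p_j# tends to zero as j → ∞: lim_{j→∞} G(p_i#, p_j#, h_1, h_2, q) = 0. -/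
/-!
Each centred count `F n₁ m h₁ - h₁ φ(n₁)/n₁` has absolute value at most `h₁`, so `|G|` is at most
`h₁ / (n₁ n₂)` times `∑ₘ |F n₂ (m + q) h₂ - h₂ φ(n₂)/n₂|`. Since `m` runs over `n₁` full periods
modulo `n₂`, every residue is hit `n₁` times and `∑ₘ F n₂ (m + q) h₂ = n₁ h₂ φ(n₂)`; hence
`|G| ≤ 2 h₁ h₂ φ(n₂)/n₂`. For `n₂ = p_j#` this density is
`∏_{k<j} (1 - 1/p_k) ≤ exp(-∑_{k<j} 1/p_k)`, which tends to zero because the sum of the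
reciprocals of the primes diverges.
-/

open Filter

/-- The primorial `p_k# = p_1 ⋯ p_k`, the product of the first `k` primes. -/
noncomputable def primorialK (k : ℕ) : ℕ := ∏ j ∈ Finset.range k, Nat.nth Nat.Prime j

open Finset
open scoped Nat Topology

theorem sum_Ico_int_add_eq_sum_range {M : Type*} [AddCommMonoid M] (f : ℤ → M) (m : ℤ) (h : ℕ) :
    ∑ r ∈ Ico m (m + h), f r = ∑ x ∈ range h, f (m + x) := by
  have : Ico m (m + h) = (range h).map ⟨fun x : ℕ => m + x, fun a b hab => by simpa using hab⟩ := by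
    ext r
    simp only [mem_Ico, Finset.mem_map, mem_range]
    constructor
    · rintro ⟨h₁, h₂⟩
      exact ⟨(r - m).toNat, by omega, show m + ((r - m).toNat : ℤ) = r by omega⟩
    · rintro ⟨x, hx, rfl⟩
      change m ≤ m + x ∧ m + x < m + h
      omega
  rw [this, sum_map]
  rfl

theorem Function.Periodic.sum_range_int_add {M : Type*} [AddCancelCommMonoid M] {f : ℤ → M}
    {n : ℕ} (hf : Function.Periodic f n) (s : ℤ) :
    ∑ x ∈ range n, f (s + x) = ∑ x ∈ range n, f x := by
  have step : ∀ s : ℤ, ∑ x ∈ range n, f (s + 1 + x) = ∑ x ∈ range n, f (s + x) := by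
    intro s
    have h := (sum_range_succ' (fun x : ℕ => f (s + x)) n).symm.trans
      (sum_range_succ (fun x : ℕ => f (s + x)) n)
    simp only [Nat.cast_zero, add_zero, hf s, Nat.cast_succ] at h
    simpa [add_assoc, add_comm (1 : ℤ)] using add_right_cancel h
  induction s using Int.induction_on with
  | zero => simp
  | succ i ih => rw [step, ih]
  | pred i ih => rw [← ih, ← step, sub_add_cancel]

theorem Function.Periodic.sum_range_mul_int_add {M : Type*} [AddCancelCommMonoid M] {f : ℤ → M}
    {n : ℕ} (hf : Function.Periodic f n) (s : ℤ) (k : ℕ) :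
    ∑ x ∈ range (k * n), f (s + x) = k • ∑ x ∈ range n, f x := by
  induction k with
  | zero => simp
  | succ k ih =>
    rw [add_mul, one_mul, sum_range_add, ih, succ_nsmul]
    simp only [Nat.cast_add, Nat.cast_mul, ← add_assoc]
    rw [hf.sum_range_int_add]

theorem sum_range_mul_ite_gcd_eq_one (n k : ℕ) (s : ℤ) :
    ∑ x ∈ range (k * n), (if Int.gcd (s + x) n = 1 then 1 else 0) = k * Nat.totient n := by
  have hper : Function.Periodic (fun r : ℤ => if Int.gcd r n = 1 then 1 else 0) (n : ℤ) :=
    fun r => by simp only [Int.gcd_add_self_left]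
  rw [hper.sum_range_mul_int_add, smul_eq_mul, Nat.totient_eq_card_coprime, card_filter]
  simp only [Int.gcd_natCast_natCast, Nat.gcd_comm _ n]

theorem F_eq_sum_range (n : ℕ) (m : ℤ) (h : ℕ) :
    F n m h = ∑ a ∈ range h, if Int.gcd (m + a) n = 1 then 1 else 0 := by
  rw [F, card_filter, sum_Ico_int_add_eq_sum_range]

theorem sum_Icc_F_add (n k h : ℕ) (t : ℤ) :
    ∑ m ∈ Icc (1 : ℤ) ((k : ℤ) * n), F n (m + t) h = k * h * Nat.totient n := by
  rw [← Ico_add_one_right_eq_Icc, add_comm _ (1 : ℤ),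
    ← Nat.cast_mul, sum_Ico_int_add_eq_sum_range]
  simp_rw [F_eq_sum_range]
  rw [sum_comm]
  calc _ = ∑ a ∈ range h, k * Nat.totient n := sum_congr rfl fun a _ => by
          rw [← sum_range_mul_ite_gcd_eq_one n k (1 + t + a)]
          refine sum_congr rfl fun x _ => ?_
          rw [show (1 : ℤ) + x + t + a = 1 + t + a + x by ring]
    _ = k * h * Nat.totient n := by rw [sum_const, card_range, smul_eq_mul]; ring

theorem F_le (n : ℕ) (m : ℤ) (h : ℕ) : F n m h ≤ h :=
  (card_filter_le _ _).trans (by simp)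

theorem abs_F_sub_mean_le (n : ℕ) (m : ℤ) (h : ℕ) : |(F n m h : ℝ) - h * φ n / n| ≤ h := by
  refine abs_sub_le_of_nonneg_of_le (by positivity) (by exact_mod_cast F_le n m h)
    (by positivity) ?_
  rcases n.eq_zero_or_pos with rfl | hn
  · simp
  rw [div_le_iff₀ (by positivity)]
  gcongr
  exact_mod_cast Nat.totient_le n

theorem abs_G_le (n₁ n₂ h₁ h₂ : ℕ) (q : ℤ) :
    |G n₁ n₂ h₁ h₂ q| ≤ 2 * h₁ * h₂ * ((φ n₂ : ℝ) / n₂) := by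
  rcases n₁.eq_zero_or_pos with rfl | hn₁
  · simp [G]; positivity
  rcases n₂.eq_zero_or_pos with rfl | hn₂
  · simp [G]
  set c₂ : ℝ := h₂ * φ n₂ / n₂ with hc₂
  have hsum : ∑ m ∈ Icc (1 : ℤ) (n₁ * n₂), (F n₂ (m + q) h₂ : ℝ) = n₁ * h₂ * φ n₂ := by
    exact_mod_cast sum_Icc_F_add n₂ n₁ h₂ q
  have hcard : #(Icc (1 : ℤ) (n₁ * n₂)) = n₁ * n₂ := by
    rw [Int.card_Icc, add_sub_cancel_right, ← Nat.cast_mul, Int.toNat_natCast]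
  calc |G n₁ n₂ h₁ h₂ q|
      = 1 / (n₁ * n₂) * |∑ m ∈ Icc (1 : ℤ) (n₁ * n₂),
          ((F n₁ m h₁ : ℝ) - h₁ * φ n₁ / n₁) * ((F n₂ (m + q) h₂ : ℝ) - c₂)| := by
        rw [G, abs_mul, abs_of_nonneg (by positivity)]
    _ ≤ 1 / (n₁ * n₂) * ∑ m ∈ Icc (1 : ℤ) (n₁ * n₂), h₁ * ((F n₂ (m + q) h₂ : ℝ) + c₂) := by
        gcongr
        refine (abs_sum_le_sum_abs _ _).trans (sum_le_sum fun m _ => ?_)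
        rw [abs_mul]
        gcongr
        · exact abs_F_sub_mean_le n₁ m h₁
        · exact (abs_sub _ _).trans_eq (by rw [abs_of_nonneg (by positivity),
            abs_of_nonneg (by positivity)])
    _ = 2 * h₁ * h₂ * ((φ n₂ : ℝ) / n₂) := by
        rw [← mul_sum, sum_add_distrib, hsum, sum_const, hcard, nsmul_eq_mul, hc₂]
        field_simp
        push_cast
        ring

theorem tendsto_prod_range_one_sub_of_not_summable {a : ℕ → ℝ} (ha₀ : ∀ k, 0 ≤ a k)
    (ha₁ : ∀ k, a k ≤ 1) (ha : ¬ Summable a) :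
    Tendsto (fun j => ∏ k ∈ range j, (1 - a k)) atTop (𝓝 0) := by
  have hexp : Tendsto (fun j => Real.exp (-∑ k ∈ range j, a k)) atTop (𝓝 0) :=
    Real.tendsto_exp_atBot.comp <| tendsto_neg_atTop_atBot.comp <|
      (not_summable_iff_tendsto_nat_atTop_of_nonneg ha₀).1 ha
  refine squeeze_zero (fun j => prod_nonneg fun k _ => sub_nonneg.2 (ha₁ k)) (fun j => ?_) hexp
  rw [← sum_neg_distrib, Real.exp_sum]
  exact prod_le_prod (fun k _ => sub_nonneg.2 (ha₁ k)) fun k _ => by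
    linarith [Real.add_one_le_exp (-a k)]

theorem not_summable_one_div_nth_prime : ¬ Summable fun k => 1 / (Nat.nth Nat.Prime k : ℝ) := by
  have hcomp : (fun k => 1 / (Nat.nth Nat.Prime k : ℝ))
      = Set.indicator {p | p.Prime} (fun n : ℕ => 1 / (n : ℝ)) ∘ Nat.nth Nat.Prime := by
    ext k
    simp [Nat.prime_nth_prime k]
  rw [hcomp, (Nat.nth_injective Nat.infinite_setOfPred_prime).summable_iff fun n hn =>
    Set.indicator_of_notMem
      (by rwa [Nat.range_nth_of_infinite Nat.infinite_setOfPred_prime] at hn) _]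
  exact not_summable_one_div_on_primes

theorem primorialK_succ (j : ℕ) : primorialK (j + 1) = Nat.nth Nat.Prime j * primorialK j := by
  rw [primorialK, prod_range_succ, mul_comm, primorialK]

theorem nth_prime_not_dvd_primorialK (j : ℕ) : ¬ Nat.nth Nat.Prime j ∣ primorialK j := by
  intro hdvd
  obtain ⟨k, hk, hpk⟩ := ((Nat.prime_nth_prime j).prime.dvd_finsetProd_iff _).1 hdvd
  have := (Nat.prime_dvd_prime_iff_eq (Nat.prime_nth_prime j) (Nat.prime_nth_prime k)).1 hpk
  exact (mem_range.1 hk).ne (Nat.nth_injective Nat.infinite_setOfPred_prime this).symm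

theorem totient_div_primorialK (j : ℕ) :
    (φ (primorialK j) : ℝ) / primorialK j = ∏ k ∈ range j, (1 - 1 / (Nat.nth Nat.Prime k : ℝ)) := by
  induction j with
  | zero => simp [primorialK]
  | succ j ih =>
    have hp := Nat.prime_nth_prime j
    have hp₀ : (Nat.nth Nat.Prime j : ℝ) ≠ 0 := by exact_mod_cast hp.ne_zero
    have hP : (primorialK j : ℝ) ≠ 0 := by
      exact_mod_cast (prod_pos fun k _ => (Nat.prime_nth_prime k).pos).ne'
    rw [primorialK_succ, Nat.totient_mul_of_prime_of_not_dvd hp (nth_prime_not_dvd_primorialK j),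
      prod_range_succ, ← ih, Nat.cast_mul, Nat.cast_mul, Nat.cast_pred hp.pos]
    field_simp

theorem tendsto_totient_div_primorialK :
    Tendsto (fun j => (φ (primorialK j) : ℝ) / primorialK j) atTop (𝓝 0) := by
  simp_rw [totient_div_primorialK]
  refine tendsto_prod_range_one_sub_of_not_summable (fun k => by positivity) (fun k => ?_)
    not_summable_one_div_nth_prime
  rw [div_le_one (by exact_mod_cast (Nat.prime_nth_prime k).pos)]
  exact_mod_cast (Nat.prime_nth_prime k).one_lt.le

theorem G_primorial_tendsto_zero_general (i : ℕ) (h₁ h₂ : ℕ) (q : ℤ) :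
    Tendsto (fun j : ℕ => G (primorialK i) (primorialK j) h₁ h₂ q)
      atTop (nhds 0) := by
  have hbound := tendsto_totient_div_primorialK.const_mul (2 * (h₁ : ℝ) * h₂)
  rw [mul_zero] at hbound
  exact squeeze_zero_norm (fun j => abs_G_le _ _ h₁ h₂ q) hbound

/-- For fixed `i ≥ 1`, interval lengths `h₁, h₂ ≥ 0`, and shift `q ≥ 0`,
the covariance `G(p_i#, p_j#, h₁, h₂, q)` tends to `0` as `j → ∞`. -/
theorem G_primorial_tendsto_zero (i : ℕ) (hi : 1 ≤ i) (h₁ h₂ : ℕ) (q : ℤ) (hq : 0 ≤ q) :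
    Tendsto (fun j : ℕ => G (primorialK i) (primorialK j) h₁ h₂ q)
      atTop (nhds 0) :=
  G_primorial_tendsto_zero_general i h₁ h₂ q
end

section
/- For every even integer n ≥ 2 and every h ≥ 0, the variance of the number of integers coprime to n in an interval of length h is bounded by its mean: H(n, h) ≤ h · φ(n)/n. -/
/-- The variance over a full period of the number of integers coprime to `n` in an
interval of length `h`: `H(n,h) = (1/n) ∑_{m=1}^n (F_n(m,h) - hφ(n)/n)²`. -/
noncomputable def Hvar (n : ℕ) (h : ℕ) : ℝ :=
  (1 / (n : ℝ)) *
    ∑ m ∈ Finset.Icc (1 : ℤ) (n : ℤ),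
      ((F n m h : ℝ) - (h : ℝ) * (Nat.totient n) / n) ^ 2

/-!
Write `F n m h = ∑_{i < h} χ (m + i)`, where `χ` is the indicator of the units of `ZMod n`.
Over a period, `F` has mean `h Q` with `Q = φ(n)/n = ∏_{p ∣ n} (1 - 1/p)`, and its second moment
is `∑_{i, j < h} δ (j - i)`, where by the Chinese remainder theorem the density `δ t` of those `x`
with `x` and `x + t` both units is `∏_{p ∣ n} (1 - 2/p + [p ∣ t]/p)`. Expanding this product over
the sets `A` of prime factors dividing `t` gives nonnegative coefficients, and at most
`h² / ∏ A + h` pairs `(i, j)` satisfy `∏ A ∣ j - i`. Resumming bounds the second moment by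
`(h Q)² + h Q`, so the variance is at most `h Q`.
-/

open Finset

theorem AddMonoidHom.card_filter_comp_mul_card {A B : Type*} [AddGroup A] [Fintype A]
    [AddGroup B] [Fintype B] [DecidableEq B] (f : A →+ B) (hf : Function.Surjective f)
    (Q : B → Prop) [DecidablePred Q] :
    #{x | Q (f x)} * Fintype.card B = Fintype.card A * #{y | Q y} := by
  set c := #{x | f x = 0}
  have hfiber (y : B) : #{x | f x = y} = c :=
    AddMonoidHom.card_fiber_eq_of_mem_range f (hf y) (hf 0)
  have hQ : #{x | Q (f x)} = #{y | Q y} * c := by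
    rw [card_eq_sum_card_fiberwise (f := f) (t := {y | Q y}) (fun x hx => by simpa using hx),
      sum_const_nat fun y hy => ?_]
    rw [← hfiber y]
    congr 1
    ext x
    simp only [mem_filter, mem_univ, true_and, and_iff_right_iff_imp]
    rintro rfl
    simpa using hy
  have hA : Fintype.card A = Fintype.card B * c := by
    rw [← card_univ, card_eq_sum_card_fiberwise (f := f) (t := univ) (fun x _ => mem_univ _),
      sum_const_nat fun y _ => by simpa using hfiber y, card_univ]
  rw [hQ, hA]
  ring

namespace ZMod

theorem sum_Icc_intCast {M : Type*} [AddCommMonoid M] (n : ℕ) [NeZero n] (g : ZMod n → M) :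
    ∑ m ∈ Icc (1 : ℤ) n, g m = ∑ x, g x := by
  have hinj : Set.InjOn (fun m : ℤ => (m : ZMod n)) (Icc (1 : ℤ) n) := by
    intro a ha b hb hab
    simp only [coe_Icc, Set.mem_Icc] at ha hb
    have := Int.eq_zero_of_abs_lt_dvd ((intCast_eq_intCast_iff_dvd_sub a b n).1 hab)
      (by rw [abs_lt]; omega)
    omega
  have hcard : #((Icc (1 : ℤ) n).image fun m : ℤ => (m : ZMod n)) = Fintype.card (ZMod n) := by
    rw [card_image_of_injOn hinj, Int.card_Icc, ZMod.card]
    simp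
  rw [← sum_image hinj, eq_univ_of_card _ hcard]

theorem card_isUnit (n : ℕ) [NeZero n] : #{x : ZMod n | IsUnit x} = n.totient := by
  rw [← card_units_eq_totient, ← card_univ, ← card_map ⟨Units.val, Units.val_injective⟩]
  congr 1
  ext x
  simp [IsUnit, eq_comm]

theorem isUnit_iff_forall_primeFactors_castHom_ne_zero {n : ℕ} [NeZero n] (x : ZMod n) :
    IsUnit x ↔ ∀ p (hp : p ∈ n.primeFactors),
      castHom (Nat.dvd_of_mem_primeFactors hp) (ZMod p) x ≠ 0 := by
  rw [← natCast_zmod_val x, isUnit_iff_coprime]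
  simp only [map_natCast, ne_eq, natCast_eq_zero_iff, Nat.mem_primeFactors]
  constructor
  · rintro hx p ⟨hp, hpn, -⟩ hpx
    exact hp.one_lt.ne' (Nat.eq_one_of_dvd_coprimes hx hpx hpn)
  · intro hx
    exact Nat.coprime_of_dvd fun p hp hpx hpn => hx p ⟨hp, hpn, NeZero.ne n⟩ hpx

instance (n : ℕ) (p : n.primeFactors) : Fact (p : ℕ).Prime :=
  ⟨Nat.prime_of_mem_primeFactors p.2⟩

def reduceModPrimeFactors (n : ℕ) : ZMod n →+* Π p : n.primeFactors, ZMod p :=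
  RingHom.pi fun p => castHom (Nat.dvd_of_mem_primeFactors p.2) (ZMod p)

theorem reduceModPrimeFactors_surjective (n : ℕ) :
    Function.Surjective (reduceModPrimeFactors n) := by
  intro y
  have hcop : Pairwise (Function.onFun Nat.Coprime fun p : n.primeFactors => (p : ℕ)) :=
    fun p q hpq => (Nat.coprime_primes (Nat.prime_of_mem_primeFactors p.2)
      (Nat.prime_of_mem_primeFactors q.2)).2 (Subtype.coe_ne_coe.2 hpq)
  have hdvd : ∏ p : n.primeFactors, (p : ℕ) ∣ n := by
    rw [prod_coe_sort n.primeFactors (fun p => p)]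
    exact Nat.prod_primeFactors_dvd n
  obtain ⟨x, hx⟩ := castHom_surjective hdvd ((prodEquivPi _ hcop).symm y)
  refine ⟨x, funext fun p => ?_⟩
  rw [← (prodEquivPi _ hcop).apply_symm_apply y, ← hx, prodEquivPi_apply]
  exact (RingHom.congr_fun (castHom_comp (dvd_prod_of_mem _ (mem_univ p)) hdvd) x).symm

theorem card_ne_zero_and_add_ne_zero_div (p : ℕ) [Fact p.Prime] (t : ℤ) :
    (#{z : ZMod p | z ≠ 0 ∧ z + t ≠ 0} : ℝ) / p =
      1 - 2 / (p : ℝ) + if (p : ℤ) ∣ t then 1 / (p : ℝ) else 0 := by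
  have hp : (p : ℝ) ≠ 0 := Nat.cast_ne_zero.2 (Fact.out : p.Prime).ne_zero
  have hS : ({z | z ≠ 0 ∧ z + t ≠ 0} : Finset (ZMod p)) = univ \ {0, -(t : ZMod p)} := by
    ext z
    simp [← eq_neg_iff_add_eq_zero]
  rw [hS, card_sdiff_of_subset (subset_univ _), card_univ, ZMod.card, div_eq_iff hp]
  split_ifs with ht
  · rw [(intCast_zmod_eq_zero_iff_dvd t p).2 ht, neg_zero, pair_eq_singleton, card_singleton,
      Nat.cast_sub (Fact.out : p.Prime).one_le]
    field_simp
    ring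
  · rw [card_pair (by simpa [eq_comm, intCast_zmod_eq_zero_iff_dvd] using ht),
      Nat.cast_sub (Fact.out : p.Prime).two_le]
    field_simp
    ring

theorem card_isUnit_and_isUnit_add (n : ℕ) [NeZero n] (t : ℤ) :
    (#{x : ZMod n | IsUnit x ∧ IsUnit (x + t)} : ℝ) =
      n * ∏ p ∈ n.primeFactors, (1 - 2 / (p : ℝ) + if (p : ℤ) ∣ t then 1 / (p : ℝ) else 0) := by
  set S : Π p : n.primeFactors, Finset (ZMod p) := fun p => {z | z ≠ 0 ∧ z + t ≠ 0}
  have hunits (x : ZMod n) :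
      IsUnit x ∧ IsUnit (x + t) ↔ reduceModPrimeFactors n x ∈ Fintype.piFinset S := by
    simp only [isUnit_iff_forall_primeFactors_castHom_ne_zero, Fintype.mem_piFinset, S,
      mem_filter, mem_univ, true_and, map_add, map_intCast, Subtype.forall, ← forall₂_and]
    rfl
  have hfib := (reduceModPrimeFactors n).toAddMonoidHom.card_filter_comp_mul_card
    (reduceModPrimeFactors_surjective n) (· ∈ Fintype.piFinset S)
  simp only [RingHom.toAddMonoidHom_eq_coe, AddMonoidHom.coe_coe, ← hunits, filter_mem_eq_inter,
    univ_inter, Fintype.card_piFinset, Fintype.card_pi, ZMod.card] at hfib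
  have hprod : ∏ p : n.primeFactors, (p : ℝ) ≠ 0 :=
    prod_ne_zero_iff.2 fun p _ => Nat.cast_ne_zero.2 (Nat.pos_of_mem_primeFactors p.2).ne'
  calc (#{x : ZMod n | IsUnit x ∧ IsUnit (x + t)} : ℝ)
      = n * (∏ p : n.primeFactors, (#(S p) : ℝ)) / ∏ p : n.primeFactors, (p : ℝ) := by
        rw [eq_div_iff hprod]
        exact_mod_cast hfib
    _ = n * ∏ p : n.primeFactors, (#(S p) : ℝ) / p := by rw [prod_div_distrib, mul_div_assoc]
    _ = _ := by
        simp only [S, card_ne_zero_and_add_ne_zero_div]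
        exact congrArg _ (prod_coe_sort n.primeFactors
          fun p => 1 - 2 / (p : ℝ) + if (p : ℤ) ∣ t then 1 / (p : ℝ) else 0)

end ZMod

theorem sum_range_sum_range_ite_dvd_sub_le {D : ℕ} (hD : 0 < D) (h : ℕ) :
    ∑ i ∈ range h, ∑ j ∈ range h, (if (D : ℤ) ∣ (j : ℤ) - i then 1 else 0 : ℝ) ≤
      h ^ 2 / D + h := by
  have hrow (i : ℕ) :
      ∑ j ∈ range h, (if (D : ℤ) ∣ (j : ℤ) - i then 1 else 0 : ℝ) ≤ h / D + 1 := by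
    rw [sum_boole, filter_congr fun j _ => Nat.modEq_iff_dvd.symm.trans Nat.ModEq.comm,
      ← Nat.count_eq_card_filter_range, Nat.count_modEq_card h hD, Nat.cast_add]
    gcongr
    · exact Nat.cast_div_le
    · split_ifs <;> simp
  calc _ ≤ ∑ _i ∈ range h, ((h : ℝ) / D + 1) := sum_le_sum fun i _ => hrow i
    _ = h ^ 2 / D + h := by rw [sum_const, card_range, nsmul_eq_mul]; ring

theorem prod_ite_dvd_eq {A : Finset ℕ} (hA : ∀ p ∈ A, p.Prime) (β : ℕ → ℝ) (t : ℤ) :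
    ∏ p ∈ A, (if (p : ℤ) ∣ t then β p else 0) =
      (∏ p ∈ A, β p) * if ((∏ p ∈ A, p : ℕ) : ℤ) ∣ t then 1 else 0 := by
  by_cases hall : ∀ p ∈ A, (p : ℤ) ∣ t
  · have hprod : ((∏ p ∈ A, p : ℕ) : ℤ) ∣ t := Int.natCast_dvd.2 <|
      prod_primes_dvd _ (fun p hp => (hA p hp).prime) fun p hp => Int.natCast_dvd.1 (hall p hp)
    rw [if_pos hprod, mul_one]
    exact prod_congr rfl fun p hp => if_pos (hall p hp)
  · push Not at hall
    obtain ⟨p, hp, hpt⟩ := hall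
    have hprod : ¬ ((∏ p ∈ A, p : ℕ) : ℤ) ∣ t := fun hdvd =>
      hpt ((Int.natCast_dvd_natCast.2 (dvd_prod_of_mem _ hp)).trans hdvd)
    rw [if_neg hprod, mul_zero]
    exact prod_eq_zero hp (if_neg hpt)

theorem sum_range_sum_range_prod_le {P : Finset ℕ} (hP : ∀ p ∈ P, p.Prime) {α β : ℕ → ℝ}
    (hα : ∀ p ∈ P, 0 ≤ α p) (hβ : ∀ p ∈ P, 0 ≤ β p) (h : ℕ) :
    ∑ i ∈ range h, ∑ j ∈ range h, ∏ p ∈ P, (α p + if (p : ℤ) ∣ (j : ℤ) - i then β p else 0) ≤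
      h ^ 2 * ∏ p ∈ P, (α p + β p / p) + h * ∏ p ∈ P, (α p + β p) := by
  set c : Finset ℕ → ℝ := fun A => (∏ p ∈ A, β p) * ∏ p ∈ P \ A, α p
  have hc (A) (hA : A ∈ P.powerset) : 0 ≤ c A := by
    have hAP := mem_powerset.1 hA
    exact mul_nonneg (prod_nonneg fun p hp => hβ p (hAP hp))
      (prod_nonneg fun p hp => hα p (mem_sdiff.1 hp).1)
  have hexpand (t : ℤ) : ∏ p ∈ P, (α p + if (p : ℤ) ∣ t then β p else 0) =
      ∑ A ∈ P.powerset, c A * if ((∏ p ∈ A, p : ℕ) : ℤ) ∣ t then 1 else 0 := by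
    simp_rw [add_comm (α _), prod_add]
    refine sum_congr rfl fun A hA => ?_
    rw [prod_ite_dvd_eq (fun p hp => hP p (mem_powerset.1 hA hp))]
    ring
  calc _ = ∑ A ∈ P.powerset, c A * ∑ i ∈ range h, ∑ j ∈ range h,
          (if ((∏ p ∈ A, p : ℕ) : ℤ) ∣ (j : ℤ) - i then 1 else 0 : ℝ) := by
        simp_rw [hexpand, mul_sum]
        symm
        rw [sum_comm]
        exact sum_congr rfl fun i _ => sum_comm
    _ ≤ ∑ A ∈ P.powerset, c A * (h ^ 2 / (∏ p ∈ A, p : ℕ) + h) := by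
        gcongr with A hA
        · exact hc A hA
        · exact sum_range_sum_range_ite_dvd_sub_le
            (prod_pos fun p hp => (hP p (mem_powerset.1 hA hp)).pos) h
    _ = h ^ 2 * ∏ p ∈ P, (α p + β p / p) + h * ∏ p ∈ P, (α p + β p) := by
        simp_rw [add_comm (α _), prod_add, mul_sum, ← sum_add_distrib]
        refine sum_congr rfl fun A _ => ?_
        simp only [c, prod_div_distrib, Nat.cast_prod]
        ring

theorem Finset.sum_sub_sq_of_sum_eq {ι : Type*} (s : Finset ι) (X : ι → ℝ) {μ : ℝ}
    (hμ : ∑ i ∈ s, X i = #s * μ) :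
    ∑ i ∈ s, (X i - μ) ^ 2 = ∑ i ∈ s, X i ^ 2 - #s * μ ^ 2 := by
  simp_rw [sub_sq, sum_add_distrib, sum_sub_distrib, ← sum_mul, ← mul_sum, hμ, sum_const,
    nsmul_eq_mul]
  ring

theorem natCast_totient_eq_mul_prod (n : ℕ) :
    (n.totient : ℝ) = n * ∏ p ∈ n.primeFactors, (1 - (p : ℝ)⁻¹) := by
  have := congrArg (Rat.cast : ℚ → ℝ) (Nat.totient_eq_mul_prod_factors n)
  push_cast at this
  exact this

def unitIndicator (n : ℕ) [NeZero n] (x : ZMod n) : ℝ := if IsUnit x then 1 else 0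

theorem natCast_F_eq_sum (n : ℕ) [NeZero n] (m : ℤ) (h : ℕ) :
    (F n m h : ℝ) = ∑ i ∈ range h, unitIndicator n (m + i) := by
  rw [F, natCast_card_filter]
  refine sum_nbij' (fun r => (r - m).toNat) (fun i => m + i) ?_ ?_ ?_ ?_ ?_ <;>
    simp only [mem_Ico, mem_range]
  · omega
  · omega
  · omega
  · omega
  · intro r hr
    have hr' : (m : ZMod n) + ((r - m).toNat : ℕ) = (r : ZMod n) := by
      rw [← Int.cast_natCast, Int.toNat_of_nonneg (by omega), ← Int.cast_add, add_sub_cancel]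
    simp only [unitIndicator, hr', ZMod.coe_int_isUnit_iff_isCoprime,
      Int.isCoprime_iff_gcd_eq_one, Int.gcd_comm (n : ℤ)]

theorem sum_unitIndicator (n : ℕ) [NeZero n] : ∑ x, unitIndicator n x = n.totient := by
  rw [← ZMod.card_isUnit, natCast_card_filter]
  rfl

theorem sum_unitIndicator_mul_add (n : ℕ) [NeZero n] (t : ℤ) :
    ∑ x, unitIndicator n x * unitIndicator n (x + t) =
      #{x : ZMod n | IsUnit x ∧ IsUnit (x + t)} := by
  simp only [unitIndicator, ite_zero_mul_ite_zero, one_mul, natCast_card_filter]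

theorem sum_Icc_F (n : ℕ) [NeZero n] (h : ℕ) :
    ∑ m ∈ Icc (1 : ℤ) n, (F n m h : ℝ) = h * ∑ x, unitIndicator n x := by
  simp_rw [natCast_F_eq_sum]
  rw [sum_comm]
  calc _ = ∑ _i ∈ range h, ∑ x, unitIndicator n x := sum_congr rfl fun i _ => by
        rw [ZMod.sum_Icc_intCast n (fun x => unitIndicator n (x + i))]
        exact Equiv.sum_comp (Equiv.addRight (i : ZMod n)) (unitIndicator n)
    _ = _ := by rw [sum_const, card_range, nsmul_eq_mul]

theorem sum_Icc_F_sq (n : ℕ) [NeZero n] (h : ℕ) :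
    ∑ m ∈ Icc (1 : ℤ) n, (F n m h : ℝ) ^ 2 = ∑ i ∈ range h, ∑ j ∈ range h,
      ∑ x, unitIndicator n x * unitIndicator n (x + (((j : ℤ) - i : ℤ) : ZMod n)) := by
  simp_rw [natCast_F_eq_sum, sq, sum_mul_sum]
  rw [sum_comm]
  refine sum_congr rfl fun i _ => ?_
  rw [sum_comm]
  refine sum_congr rfl fun j _ => ?_
  rw [ZMod.sum_Icc_intCast n (fun x => unitIndicator n (x + i) * unitIndicator n (x + j)),
    ← Equiv.sum_comp (Equiv.addRight (i : ZMod n))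
      (fun x => unitIndicator n x * unitIndicator n (x + (((j : ℤ) - i : ℤ) : ZMod n)))]
  refine sum_congr rfl fun x _ => ?_
  simp only [Equiv.coe_addRight]
  congr 2
  push_cast
  ring

theorem sum_Icc_F_sq_le (n : ℕ) [NeZero n] (h : ℕ) :
    ∑ m ∈ Icc (1 : ℤ) n, (F n m h : ℝ) ^ 2 ≤
      n * ((h * ∏ p ∈ n.primeFactors, (1 - (p : ℝ)⁻¹)) ^ 2 +
        h * ∏ p ∈ n.primeFactors, (1 - (p : ℝ)⁻¹)) := by
  have hP (p) (hp : p ∈ n.primeFactors) : (2 : ℝ) ≤ p := by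
    exact_mod_cast (Nat.prime_of_mem_primeFactors hp).two_le
  simp_rw [sum_Icc_F_sq, sum_unitIndicator_mul_add, ZMod.card_isUnit_and_isUnit_add, ← mul_sum]
  gcongr
  refine (sum_range_sum_range_prod_le (fun p hp => Nat.prime_of_mem_primeFactors hp)
    (fun p hp => ?_) (fun p hp => ?_) h).trans_eq ?_
  · have := hP p hp
    rw [sub_nonneg, div_le_one (by linarith)]
    exact this
  · have := hP p hp
    positivity
  · rw [mul_pow, ← prod_pow]
    congr 2 <;> refine prod_congr rfl fun p hp => ?_
    · have := hP p hp
      field_simp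
      ring
    · ring

theorem variance_le_mean_general (n : ℕ) (h : ℕ) :
    Hvar n h ≤ (h : ℝ) * (Nat.totient n) / n := by
  obtain rfl | hn := eq_or_ne n 0
  · simp [Hvar]
  have : NeZero n := ⟨hn⟩
  set Q := ∏ p ∈ n.primeFactors, (1 - (p : ℝ)⁻¹)
  have hn' : (0 : ℝ) < n := by positivity
  have hcard : (#(Icc (1 : ℤ) n) : ℝ) = n := by simp
  have hmean : (h : ℝ) * n.totient / n = h * Q := by
    rw [natCast_totient_eq_mul_prod, mul_div_assoc, mul_div_cancel_left₀ _ hn'.ne']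
  have hsum : ∑ m ∈ Icc (1 : ℤ) n, (F n m h : ℝ) = #(Icc (1 : ℤ) n) * (h * Q) := by
    rw [sum_Icc_F, sum_unitIndicator, natCast_totient_eq_mul_prod, hcard]
    ring
  rw [Hvar, hmean, sum_sub_sq_of_sum_eq _ _ hsum, hcard]
  calc 1 / (n : ℝ) * (∑ m ∈ Icc (1 : ℤ) n, (F n m h : ℝ) ^ 2 - n * (h * Q) ^ 2)
      ≤ 1 / n * (n * ((h * Q) ^ 2 + h * Q) - n * (h * Q) ^ 2) := by
        gcongr
        exact sum_Icc_F_sq_le n h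
    _ = h * Q := by
        field_simp
        ring

/-- For every even `n ≥ 2` and every `h ≥ 0`, the variance of the coprime
count is bounded by its mean: `H(n,h) ≤ h φ(n)/n`. -/
theorem variance_le_mean (n : ℕ) (hn : 2 ≤ n) (heven : 2 ∣ n) (h : ℕ) :
    Hvar n h ≤ (h : ℝ) * (Nat.totient n) / n :=
  variance_le_mean_general n h
end

section
/- Assume Cramér's conjecture in the form: there exists a constant C > 0 such that p_{k+1} - p_k ≤ C (log p_k)^2 for all k ≥ 1. Then log(p_{k+1}^2 / l_k) ~ (1/2) log(p_{k+1}^2) as k → ∞; that is, lim_{k→∞} log(p_{k+1}^2 / l_k) / ((1/2) log(p_{k+1}^2)) = 1. -/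
/-!
Write `p = p_k`, `q = p_{k-1}` and `l = p² - q²`. The quantity in question equals
`2 - log l / log p`, and `p ≤ l ≤ 2 p (p - q)`, so under Cramér's conjecture
`p ≤ l ≤ 2C p (log p)²`. Taking logarithms, `log l / log p` is squeezed between `1` and
`1 + (log (2C) + 2 log log p) / log p`, which tends to `1`.
-/

open Filter Topology Real

theorem tendsto_log_div_log_of_le_of_le_mul_log_pow {ι : Type*} {L : Filter ι} {x y : ι → ℝ}
    {c : ℝ} (n : ℕ) (hc : 0 < c) (hx : Tendsto x L atTop) (hlow : ∀ᶠ i in L, x i ≤ y i)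
    (hup : ∀ᶠ i in L, y i ≤ c * x i * log (x i) ^ n) :
    Tendsto (fun i => log (y i) / log (x i)) L (𝓝 1) := by
  have hlogx : Tendsto (fun i => log (x i)) L atTop := tendsto_log_atTop.comp hx
  have herr : Tendsto (fun i => (log c + n * log (log (x i))) / log (x i)) L (𝓝 0) := by
    have hloglog : Tendsto (fun i => log (log (x i)) / log (x i)) L (𝓝 0) :=
      isLittleO_log_id_atTop.tendsto_div_nhds_zero.comp hlogx
    simpa [add_div, mul_div_assoc] using
      (tendsto_const_nhds.div_atTop hlogx).add (hloglog.const_mul (n : ℝ))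
  refine tendsto_of_tendsto_of_tendsto_of_le_of_le' tendsto_const_nhds
    (by simpa using tendsto_const_nhds.add herr) ?_ ?_
  · filter_upwards [hlow, hx.eventually_gt_atTop 1] with i hxy hx1
    rw [le_div_iff₀ (log_pos hx1), one_mul]
    exact log_le_log (by linarith) hxy
  · filter_upwards [hlow, hup, hx.eventually_gt_atTop 1] with i hxy hyc hx1
    have hlog : 0 < log (x i) := log_pos hx1
    have hlog_y : log (y i) ≤ log c + log (x i) + n * log (log (x i)) := by
      calc log (y i) ≤ log (c * x i * log (x i) ^ n) := log_le_log (by linarith) hyc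
        _ = log c + log (x i) + n * log (log (x i)) := by
          rw [log_mul (by positivity) (by positivity), log_mul hc.ne' (by positivity), log_pow]
    rw [div_le_iff₀ hlog, add_mul, one_mul, div_mul_cancel₀ _ hlog.ne']
    linarith

theorem le_sq_sub_sq {p q : ℝ} (hq : 0 ≤ q) (hqp : q + 1 ≤ p) : p ≤ p ^ 2 - q ^ 2 := by
  nlinarith

theorem sq_sub_sq_le_two_mul_mul {p q g : ℝ} (hq : 0 ≤ q) (hqp : q ≤ p) (hg : p - q ≤ g) :
    p ^ 2 - q ^ 2 ≤ 2 * p * g := by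
  nlinarith

theorem log_sq_div_div_half_log_sq {p l : ℝ} (hl : l ≠ 0) (hp : log p ≠ 0) :
    log (p ^ 2 / l) / (1 / 2 * log (p ^ 2)) = 2 - log l / log p := by
  have hp0 : p ≠ 0 := by rintro rfl; simp at hp
  rw [log_div (pow_ne_zero 2 hp0) hl, log_pow]
  field_simp
  ring

theorem nth_prime_pred_add_one_le {k : ℕ} (hk : 1 ≤ k) :
    Nat.nth Nat.Prime (k - 1) + 1 ≤ Nat.nth Nat.Prime k :=
  Nat.nth_strictMono Nat.infinite_setOfPred_prime (by omega)

theorem tendsto_nth_prime_atTop : Tendsto (fun k => (Nat.nth Nat.Prime k : ℝ)) atTop atTop :=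
  tendsto_natCast_atTop_atTop.comp (Nat.nth_strictMono Nat.infinite_setOfPred_prime).tendsto_atTop

theorem le_nth_prime_sq_sub_sq {k : ℕ} (hk : 1 ≤ k) :
    (Nat.nth Nat.Prime k : ℝ) ≤
      (Nat.nth Nat.Prime k : ℝ) ^ 2 - (Nat.nth Nat.Prime (k - 1) : ℝ) ^ 2 :=
  le_sq_sub_sq (Nat.cast_nonneg _) (by exact_mod_cast nth_prime_pred_add_one_le hk)

theorem nth_prime_sq_sub_sq_le {C : ℝ} (hC : 0 ≤ C) {k : ℕ} (hk : 1 ≤ k)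
    (hgap : (Nat.nth Nat.Prime k : ℝ) - (Nat.nth Nat.Prime (k - 1) : ℝ) ≤
      C * log (Nat.nth Nat.Prime (k - 1) : ℝ) ^ 2) :
    (Nat.nth Nat.Prime k : ℝ) ^ 2 - (Nat.nth Nat.Prime (k - 1) : ℝ) ^ 2 ≤
      2 * C * Nat.nth Nat.Prime k * log (Nat.nth Nat.Prime k : ℝ) ^ 2 := by
  have hqp : (Nat.nth Nat.Prime (k - 1) : ℝ) + 1 ≤ Nat.nth Nat.Prime k := by
    exact_mod_cast nth_prime_pred_add_one_le hk
  have hq : (1 : ℝ) ≤ Nat.nth Nat.Prime (k - 1) := by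
    exact_mod_cast (Nat.prime_nth_prime (k - 1)).one_lt.le
  set p : ℝ := (Nat.nth Nat.Prime k : ℝ)
  set q : ℝ := (Nat.nth Nat.Prime (k - 1) : ℝ)
  have hlog : log q ^ 2 ≤ log p ^ 2 :=
    pow_le_pow_left₀ (log_nonneg hq) (log_le_log (by linarith) (by linarith)) 2
  calc p ^ 2 - q ^ 2 ≤ 2 * p * (C * log p ^ 2) :=
        sq_sub_sq_le_two_mul_mul (by linarith) (by linarith)
          (hgap.trans (mul_le_mul_of_nonneg_left hlog hC))
    _ = 2 * C * p * log p ^ 2 := by ring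

/-- Assuming Cramér's conjecture (there exists `C > 0` with
`p_{k+1} - p_k ≤ C (log p_k)²` for all `k ≥ 1`), with `p_k = Nat.nth Nat.Prime (k-1)`
and `l_k = p_{k+1}^2 - p_k^2`, one has
`log(p_{k+1}^2 / l_k) ~ (1/2) log(p_{k+1}^2)` as `k → ∞`. -/
theorem log_ratio_asymp
    (hCramer : ∃ C : ℝ, 0 < C ∧ ∀ k : ℕ, 1 ≤ k →
      (Nat.nth Nat.Prime k : ℝ) - (Nat.nth Nat.Prime (k - 1) : ℝ) ≤
        C * (Real.log (Nat.nth Nat.Prime (k - 1) : ℝ)) ^ 2) :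
    Tendsto (fun k : ℕ =>
        Real.log ((Nat.nth Nat.Prime k : ℝ) ^ 2 /
            ((Nat.nth Nat.Prime k : ℝ) ^ 2 - (Nat.nth Nat.Prime (k - 1) : ℝ) ^ 2)) /
          ((1 / 2) * Real.log ((Nat.nth Nat.Prime k : ℝ) ^ 2)))
      atTop (nhds 1) := by
  obtain ⟨C, hC, hgap⟩ := hCramer
  have hlow := eventually_atTop.2 ⟨1, fun k hk => le_nth_prime_sq_sub_sq hk⟩
  have hup := eventually_atTop.2 ⟨1, fun k hk => nth_prime_sq_sub_sq_le hC.le hk (hgap k hk)⟩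
  have hratio := tendsto_log_div_log_of_le_of_le_mul_log_pow 2 (by positivity)
    tendsto_nth_prime_atTop hlow hup
  have hlim : Tendsto (fun k => 2 - log ((Nat.nth Nat.Prime k : ℝ) ^ 2 -
      (Nat.nth Nat.Prime (k - 1) : ℝ) ^ 2) / log (Nat.nth Nat.Prime k : ℝ)) atTop (𝓝 1) := by
    convert (tendsto_const_nhds (x := (2 : ℝ))).sub hratio using 2
    norm_num
  refine hlim.congr' ?_
  filter_upwards [hlow, tendsto_nth_prime_atTop.eventually_gt_atTop 1] with k hl hp
  exact (log_sq_div_div_half_log_sq (by linarith) (log_pos hp).ne').symm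
end

section
/- Assume Cramér's conjecture in the form: there exists a constant C > 0 such that p_{k+1} - p_k ≤ C (log p_k)^2 for all k ≥ 1. Then Σ_{j=1}^{k} l_j · log(p_{j+1}^2 / l_j) / (log p_{j+1}^2)^2 ~ (1/2) li(p_{k+1}^2) as k → ∞; that is, the ratio of the two sides tends to 1. -/
open Filter

/-- `li(x) := ∫_2^x dt / log t`. -/
noncomputable def li (x : ℝ) : ℝ := ∫ t in (2:ℝ)..x, 1 / Real.log t

/-!
On `[p_j², p_{j+1}²]` the integrand `1 / log t` lies between `1 / (2 log p_{j+1})` and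
`1 / (2 log p_j)`, so the `j`-th increment of `½ li(p_k²)` is `l_j / (4 log p_{j+1})` up to a
factor between `1` and `log p_{j+1} / log p_j`, while the `j`-th summand is exactly
`l_j / (4 log p_{j+1})` times `2 - log l_j / log p_{j+1}`. Cramér's bound gives
`p_{j+1} ≤ l_j ≤ 2C (log p_{j+1})² p_{j+1}` and `log p_{j+1} - log p_j ≤ C (log p_j)² / p_j`,
so both factors tend to `1`: summands and increments are asymptotically equivalent. As
`li → ∞`, the partial sums of these nonnegative increments diverge, and summing preserves the
equivalence.
-/

open Real Asymptotics Finset MeasureTheory Topology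

theorem intervalIntegrable_one_div_log {a b : ℝ} (ha : 1 < a) (hb : 1 < b) :
    IntervalIntegrable (fun t => 1 / log t) volume a b := by
  have hgt : ∀ t ∈ Set.uIcc a b, 1 < t := fun t ht => (lt_min ha hb).trans_le ht.1
  refine ContinuousOn.intervalIntegrable (continuousOn_const.div
    (continuousOn_log.mono fun t ht => ?_) fun t ht => (log_pos (hgt t ht)).ne')
  exact (zero_lt_one.trans (hgt t ht)).ne'

theorem li_sub_li {a b : ℝ} (ha : 1 < a) (hb : 1 < b) :
    li b - li a = ∫ t in a..b, 1 / log t :=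
  intervalIntegral.integral_interval_sub_left
    (intervalIntegrable_one_div_log one_lt_two hb) (intervalIntegrable_one_div_log one_lt_two ha)

theorem div_log_le_li_sub_li {a b : ℝ} (ha : 1 < a) (hab : a ≤ b) :
    (b - a) / log b ≤ li b - li a := by
  rw [li_sub_li ha (ha.trans_le hab), div_eq_mul_one_div, ← smul_eq_mul,
    ← intervalIntegral.integral_const]
  refine intervalIntegral.integral_mono_on hab intervalIntegrable_const
    (intervalIntegrable_one_div_log ha (ha.trans_le hab)) fun t ht => ?_
  gcongr
  · exact log_pos (ha.trans_le ht.1)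
  · linarith [ht.1]
  · exact ht.2

theorem li_sub_li_le_div_log {a b : ℝ} (ha : 1 < a) (hab : a ≤ b) :
    li b - li a ≤ (b - a) / log a := by
  rw [li_sub_li ha (ha.trans_le hab), div_eq_mul_one_div, ← smul_eq_mul,
    ← intervalIntegral.integral_const]
  refine intervalIntegral.integral_mono_on hab
    (intervalIntegrable_one_div_log ha (ha.trans_le hab)) intervalIntegrable_const fun t ht => ?_
  gcongr
  · exact log_pos ha
  · exact ht.1

theorem li_le_li {a b : ℝ} (ha : 1 < a) (hab : a ≤ b) : li a ≤ li b :=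
  sub_nonneg.1 <| (div_nonneg (sub_nonneg.2 hab) (log_nonneg (ha.le.trans hab))).trans
    (div_log_le_li_sub_li ha hab)

theorem tendsto_div_log_atTop : Tendsto (fun x => x / log x) atTop atTop :=
  ((tendsto_exp_div_pow_atTop 1).comp tendsto_log_atTop).congr' <|
    (eventually_gt_atTop 0).mono fun x hx => by simp [exp_log hx]

theorem tendsto_li_atTop : Tendsto li atTop atTop := by
  have hlow : ∀ᶠ x in atTop, x / log x - 2 / log x ≤ li x :=
    (eventually_ge_atTop 2).mono fun x hx => by
      simpa [li, sub_div] using div_log_le_li_sub_li one_lt_two hx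
  refine tendsto_atTop_mono' atTop hlow ?_
  simpa [sub_eq_add_neg] using tendsto_div_log_atTop.atTop_add
    ((tendsto_const_nhds (x := (2:ℝ))).div_atTop tendsto_log_atTop).neg

theorem tendsto_log_mul_log_sq_mul_div_log {K : ℝ} (hK : 0 < K) :
    Tendsto (fun x => log (K * log x ^ 2 * x) / log x) atTop (𝓝 1) := by
  have hloglog : Tendsto (fun x => log (log x) / log x) atTop (𝓝 0) :=
    (isLittleO_log_id_atTop.tendsto_div_nhds_zero).comp tendsto_log_atTop
  have hlim := ((tendsto_const_nhds (x := log K)).div_atTop tendsto_log_atTop).add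
    (hloglog.const_mul 2) |>.const_add 1
  rw [mul_zero, add_zero, add_zero] at hlim
  refine hlim.congr' ?_
  filter_upwards [eventually_gt_atTop 1] with x hx
  have hlogx : 0 < log x := log_pos hx
  rw [log_mul (by positivity) (by positivity), log_mul hK.ne' (by positivity), log_pow]
  field_simp
  push_cast
  ring

theorem tendsto_sum_div_of_isEquivalent_sub {f F : ℕ → ℝ} (hF : ∀ j, F j ≤ F (j + 1))
    (hFtop : Tendsto F atTop atTop) (hf : f ~[atTop] fun j => F (j + 1) - F j) :
    Tendsto (fun k => (∑ j ∈ range k, f j) / F k) atTop (𝓝 1) := by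
  have htele : ∀ k, ∑ j ∈ range k, (F (j + 1) - F j) = F k - F 0 := sum_range_sub F
  have hsum : (fun k => ∑ j ∈ range k, f j) ~[atTop] fun k => F k - F 0 := by
    have hFtop' : Tendsto (fun k => F k - F 0) atTop atTop := by
      simpa only [sub_eq_add_neg] using tendsto_atTop_add_const_right _ (-F 0) hFtop
    have hsmall := hf.isLittleO.sum_range (fun j => sub_nonneg.2 (hF j))
      (by simpa only [htele] using hFtop')
    simp only [htele, Pi.sub_apply, sum_sub_distrib] at hsmall
    exact hsmall
  have hshift : (fun k => F k - F 0) ~[atTop] F := by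
    simpa only [sub_eq_add_neg] using
      (IsEquivalent.refl (u := F)).add_const_of_norm_tendsto_atTop (c := -F 0)
        (tendsto_norm_atTop_atTop.comp hFtop)
  exact (isEquivalent_iff_tendsto_one (hFtop.eventually_ne_atTop 0)).1 (hsum.trans hshift)

section GapsOfSquares

variable {p : ℕ → ℝ} {C : ℝ}

noncomputable def sqGap (p : ℕ → ℝ) (j : ℕ) : ℝ := p (j + 1) ^ 2 - p j ^ 2

noncomputable def varianceTerm (p : ℕ → ℝ) (j : ℕ) : ℝ :=
  sqGap p j * log (p (j + 1) ^ 2 / sqGap p j) / log (p (j + 1) ^ 2) ^ 2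

theorem tendsto_atTop_of_add_one_le (hp : ∀ j, p j + 1 ≤ p (j + 1)) :
    Tendsto p atTop atTop := by
  have hlin : ∀ j : ℕ, p 0 + j ≤ p j := by
    intro j
    induction j with
    | zero => simp
    | succ j ih => push_cast; linarith [hp j]
  exact tendsto_atTop_mono hlin (tendsto_atTop_add_const_left _ _ tendsto_natCast_atTop_atTop)

theorem le_sqGap (hp0 : ∀ j, 0 ≤ p j) (hp : ∀ j, p j + 1 ≤ p (j + 1)) (j : ℕ) :
    p (j + 1) ≤ sqGap p j := by
  have := hp0 j
  have := hp j
  rw [sqGap]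
  nlinarith

theorem sqGap_le (hC : 0 < C) (hp1 : ∀ j, 1 < p j) (hp : ∀ j, p j + 1 ≤ p (j + 1))
    (hgap : ∀ j, p (j + 1) - p j ≤ C * log (p j) ^ 2) (j : ℕ) :
    sqGap p j ≤ 2 * C * log (p (j + 1)) ^ 2 * p (j + 1) := by
  have hpj := hp1 j
  have hpq := hp j
  have hlog : log (p j) ^ 2 ≤ log (p (j + 1)) ^ 2 := by
    gcongr
    · exact (log_pos hpj).le
    · linarith
  calc sqGap p j = (p (j + 1) - p j) * (p (j + 1) + p j) := by rw [sqGap]; ring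
    _ ≤ C * log (p (j + 1)) ^ 2 * (2 * p (j + 1)) := by
        gcongr
        · linarith
        · exact (hgap j).trans (by gcongr)
        · linarith
    _ = 2 * C * log (p (j + 1)) ^ 2 * p (j + 1) := by ring

theorem tendsto_log_succ_div_log (hp1 : ∀ j, 1 < p j) (hp : ∀ j, p j + 1 ≤ p (j + 1))
    (hgap : ∀ j, p (j + 1) - p j ≤ C * log (p j) ^ 2) :
    Tendsto (fun j => log (p (j + 1)) / log (p j)) atTop (𝓝 1) := by
  have hptop := tendsto_atTop_of_add_one_le hp
  have hbound : Tendsto (fun j => C * (log (p j) ^ 2 / p j)) atTop (𝓝 0) := by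
    simpa using ((tendsto_pow_log_div_mul_add_atTop 1 0 2 one_ne_zero).comp hptop).const_mul C
  have hdiff : Tendsto (fun j => log (p (j + 1)) - log (p j)) atTop (𝓝 0) := by
    refine tendsto_of_tendsto_of_tendsto_of_le_of_le tendsto_const_nhds hbound (fun j => ?_)
      fun j => ?_
    · exact sub_nonneg.2 (log_le_log (by linarith [hp1 j]) (by linarith [hp j]))
    · have hpj : 0 < p j := by linarith [hp1 j]
      have hq : 0 < p (j + 1) := by linarith [hp j]
      calc log (p (j + 1)) - log (p j) = log (p (j + 1) / p j) :=
            (log_div hq.ne' hpj.ne').symm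
        _ ≤ p (j + 1) / p j - 1 := log_le_sub_one_of_pos (by positivity)
        _ = (p (j + 1) - p j) / p j := by field_simp
        _ ≤ C * log (p j) ^ 2 / p j := by gcongr; exact hgap j
        _ = C * (log (p j) ^ 2 / p j) := by ring
  have hlim := (hdiff.div_atTop (tendsto_log_atTop.comp hptop)).const_add 1
  rw [add_zero] at hlim
  refine hlim.congr fun j => ?_
  have : log (p j) ≠ 0 := (log_pos (hp1 j)).ne'
  simp only [Function.comp_apply]
  field_simp
  ring

theorem tendsto_log_sqGap_div_log (hC : 0 < C) (hp1 : ∀ j, 1 < p j)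
    (hp : ∀ j, p j + 1 ≤ p (j + 1)) (hgap : ∀ j, p (j + 1) - p j ≤ C * log (p j) ^ 2) :
    Tendsto (fun j => log (sqGap p j) / log (p (j + 1))) atTop (𝓝 1) := by
  have hqtop : Tendsto (fun j => p (j + 1)) atTop atTop :=
    (tendsto_atTop_of_add_one_le hp).comp (tendsto_add_atTop_nat 1)
  refine tendsto_of_tendsto_of_tendsto_of_le_of_le tendsto_const_nhds
    ((tendsto_log_mul_log_sq_mul_div_log (by positivity : 0 < 2 * C)).comp hqtop)
    (fun j => ?_) fun j => ?_
  all_goals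
    have hq : 0 < p (j + 1) := by linarith [hp1 (j + 1)]
    have hlq : 0 < log (p (j + 1)) := log_pos (hp1 (j + 1))
    have hl := le_sqGap (fun j => (zero_lt_one.trans (hp1 j)).le) hp j
  · rw [le_div_iff₀ hlq, one_mul]
    exact log_le_log hq hl
  · exact div_le_div_of_nonneg_right
      (log_le_log (hq.trans_le hl) (sqGap_le hC hp1 hp hgap j)) hlq.le

theorem sqGap_pos (hp1 : ∀ j, 1 < p j) (hp : ∀ j, p j + 1 ≤ p (j + 1)) (j : ℕ) :
    0 < sqGap p j :=
  (zero_lt_one.trans (hp1 (j + 1))).trans_le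
    (le_sqGap (fun j => (zero_lt_one.trans (hp1 j)).le) hp j)

theorem isEquivalent_varianceTerm_sqGap_div_log (hC : 0 < C) (hp1 : ∀ j, 1 < p j)
    (hp : ∀ j, p j + 1 ≤ p (j + 1)) (hgap : ∀ j, p (j + 1) - p j ≤ C * log (p j) ^ 2) :
    varianceTerm p ~[atTop] fun j => sqGap p j / (4 * log (p (j + 1))) := by
  refine isEquivalent_of_tendsto_one ?_
  have hlim := (tendsto_log_sqGap_div_log hC hp1 hp hgap).const_sub 2
  rw [show (2 : ℝ) - 1 = 1 by norm_num] at hlim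
  refine hlim.congr fun j => ?_
  have hlq : log (p (j + 1)) ≠ 0 := (log_pos (hp1 (j + 1))).ne'
  have hq : p (j + 1) ≠ 0 := (zero_lt_one.trans (hp1 (j + 1))).ne'
  have hl := (sqGap_pos hp1 hp j).ne'
  simp only [Pi.div_apply, varianceTerm]
  rw [log_div (pow_ne_zero 2 hq) hl, log_pow]
  field_simp
  ring

theorem isEquivalent_half_li_sub_sqGap_div_log (hp1 : ∀ j, 1 < p j)
    (hp : ∀ j, p j + 1 ≤ p (j + 1)) (hgap : ∀ j, p (j + 1) - p j ≤ C * log (p j) ^ 2) :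
    (fun j => 1 / 2 * li (p (j + 1) ^ 2) - 1 / 2 * li (p j ^ 2)) ~[atTop]
      fun j => sqGap p j / (4 * log (p (j + 1))) := by
  refine isEquivalent_of_tendsto_one <| tendsto_of_tendsto_of_tendsto_of_le_of_le
    tendsto_const_nhds (tendsto_log_succ_div_log hp1 hp hgap) (fun j => ?_) fun j => ?_
  all_goals
    have hpj := hp1 j
    have hpq := hp j
    have hlq := log_pos (hp1 (j + 1))
    have ha : 1 < p j ^ 2 := one_lt_pow₀ hpj two_ne_zero
    have hab : p j ^ 2 ≤ p (j + 1) ^ 2 := pow_le_pow_left₀ (by linarith) (by linarith) 2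
    have hh : 0 < sqGap p j / (4 * log (p (j + 1))) := by
      have := sqGap_pos hp1 hp j
      positivity
    simp only [Pi.div_apply]
  · rw [le_div_iff₀ hh, one_mul]
    calc sqGap p j / (4 * log (p (j + 1)))
        = (p (j + 1) ^ 2 - p j ^ 2) / log (p (j + 1) ^ 2) / 2 := by
          simp only [sqGap, log_pow]; push_cast; ring
      _ ≤ 1 / 2 * li (p (j + 1) ^ 2) - 1 / 2 * li (p j ^ 2) := by
          linarith [div_log_le_li_sub_li ha hab]
  · have hlp := log_pos hpj
    rw [div_le_iff₀ hh]
    calc 1 / 2 * li (p (j + 1) ^ 2) - 1 / 2 * li (p j ^ 2)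
        ≤ (p (j + 1) ^ 2 - p j ^ 2) / log (p j ^ 2) / 2 := by
          linarith [li_sub_li_le_div_log ha hab]
      _ = log (p (j + 1)) / log (p j) * (sqGap p j / (4 * log (p (j + 1)))) := by
          simp only [sqGap, log_pow]; push_cast; field_simp; ring

theorem tendsto_sum_varianceTerm_div_half_li (hC : 0 < C) (hp1 : ∀ j, 1 < p j)
    (hp : ∀ j, p j + 1 ≤ p (j + 1)) (hgap : ∀ j, p (j + 1) - p j ≤ C * log (p j) ^ 2) :
    Tendsto (fun k => (∑ j ∈ range k, varianceTerm p j) / (1 / 2 * li (p k ^ 2))) atTop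
      (𝓝 1) := by
  refine tendsto_sum_div_of_isEquivalent_sub (fun j => ?_) ?_
    ((isEquivalent_varianceTerm_sqGap_div_log hC hp1 hp hgap).trans
      (isEquivalent_half_li_sub_sqGap_div_log hp1 hp hgap).symm)
  · have hpj := hp1 j
    have hpq := hp j
    gcongr
    exact li_le_li (one_lt_pow₀ hpj two_ne_zero)
      (pow_le_pow_left₀ (by linarith) (by linarith) 2)
  · exact (tendsto_li_atTop.comp ((tendsto_pow_atTop two_ne_zero).comp
      (tendsto_atTop_of_add_one_le hp))).const_mul_atTop one_half_pos

end GapsOfSquares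

/-- Assuming Cramér's conjecture (there exists `C > 0` with
`p_{k+1} - p_k ≤ C (log p_k)²` for all `k ≥ 1`), with `p_k = Nat.nth Nat.Prime (k-1)`
and `l_j = p_{j+1}^2 - p_j^2`, one has
`∑_{j=1}^k l_j log(p_{j+1}^2/l_j) / (log p_{j+1}^2)² ~ (1/2) li(p_{k+1}^2)` as `k → ∞`. -/
theorem variance_sum_asymp_half_li
    (hCramer : ∃ C : ℝ, 0 < C ∧ ∀ k : ℕ, 1 ≤ k →
      (Nat.nth Nat.Prime k : ℝ) - (Nat.nth Nat.Prime (k - 1) : ℝ) ≤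
        C * (Real.log (Nat.nth Nat.Prime (k - 1) : ℝ)) ^ 2) :
    Tendsto (fun k : ℕ =>
        (∑ j ∈ Finset.range k,
            (((Nat.nth Nat.Prime (j + 1) : ℝ) ^ 2 - (Nat.nth Nat.Prime j : ℝ) ^ 2) *
                Real.log ((Nat.nth Nat.Prime (j + 1) : ℝ) ^ 2 /
                  ((Nat.nth Nat.Prime (j + 1) : ℝ) ^ 2 - (Nat.nth Nat.Prime j : ℝ) ^ 2)) /
              (Real.log ((Nat.nth Nat.Prime (j + 1) : ℝ) ^ 2)) ^ 2)) /
          ((1 / 2) * li ((Nat.nth Nat.Prime k : ℝ) ^ 2)))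
      atTop (nhds 1) := by
  obtain ⟨C, hC, hgap⟩ := hCramer
  exact tendsto_sum_varianceTerm_div_half_li (p := fun j => (Nat.nth Nat.Prime j : ℝ)) hC
    (fun j => by exact_mod_cast (Nat.prime_nth_prime j).one_lt)
    (fun j => by exact_mod_cast Nat.nth_strictMono Nat.infinite_setOfPred_prime j.lt_succ_self)
    fun j => by simpa using hgap (j + 1) j.succ_pos
end
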